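/- arXiv:2507.07152 — 2 statements merged into one kernel-verified Lean document; each statement's English description precedes it below -/
import Mathlib

section
/- Let H_1(s) be an (m−1)×n matrix pencil and H(s) an m×n matrix pencil over an algebraically closed field with rank(H(s)) = rank(H_1(s)), and suppose H(s) is strictly equivalent to a pencil formed by adding one row h(s) to H_1(s). Then their Weyr characteristics satisfy: (i) −1 ≤ w_i(λ) − w^1_i(λ) ≤ 0 for all i ≥ 1 and all λ in the extended field; (ii) r_i = r_i^1 for all i ≥ 0; (iii) 1 − ⌊√(|s_*^1| + 1)⌋ ≤ s_i − s_i^1 ≤ 1 for all i ≥ 0. -/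
/-- An infinite weakly decreasing sequence of nonnegative integers, almost all zero. -/
def IsPartition (p : ℕ → ℕ) : Prop :=
  (∀ i j, i ≤ j → p j ≤ p i) ∧ ∃ N, ∀ i, N ≤ i → p i = 0

/-- `conjPart p k` is the `(k+1)`-st entry of the conjugate partition of `p`,
where `p i` denotes the `(i+1)`-st entry of `p`; i.e. `#{i : p_i ≥ k+1}`. -/
noncomputable def conjPart (p : ℕ → ℕ) (k : ℕ) : ℕ :=
  Nat.card {i : ℕ | k + 1 ≤ p i}

/-- Sum of all entries of an (almost all zero) sequence. -/
noncomputable def psum (p : ℕ → ℕ) : ℕ := ∑ᶠ i, p i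

/-- The tail `(p_1, p_2, …)` of a starred partition `p_* = (p_0, p_1, …)`. -/
def ptail (p : ℕ → ℕ) : ℕ → ℕ := fun i => p (i + 1)

/-- `CMaj s r` : the starred partition `s_*` is conjugate-majorized by `r_*`
(written `s_* ∠ r_*`): `r_0 = s_0 + 1` and `r_i = s_i + 1` for all
`0 ≤ i ≤ g`, where `g = max {i : r_i > s_i}`. -/
def CMaj (s r : ℕ → ℕ) : Prop :=
  r 0 = s 0 + 1 ∧ ∀ i ≤ sSup {j | s j < r j}, r i = s i + 1

/-- Weyr data at each eigenvalue: a partition for every `λ` in the extended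
field, nonzero for only finitely many `λ`. -/
def IsEigPartitions {Λ : Type*} (w : Λ → ℕ → ℕ) : Prop :=
  (∀ l, IsPartition (w l)) ∧ (Function.support w).Finite

/-- `|W|`: total sum over all eigenvalues of all entries of `w(λ)`. -/
noncomputable def wsum {Λ : Type*} (w : Λ → ℕ → ℕ) : ℕ := ∑ᶠ l, ∑ᶠ i, w l i

lemma psum_eq_range {f : ℕ → ℕ} {N : ℕ} (h : ∀ i, N ≤ i → f i = 0) :
    psum f = ∑ i ∈ Finset.range N, f i := by
  apply finsum_eq_sum_of_support_subset
  intro i hi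
  simp only [Function.mem_support] at hi
  simp only [Finset.coe_range, Set.mem_Iio]
  by_contra hc
  exact hi (h i (le_of_not_gt hc))

lemma psum_mono {f g : ℕ → ℕ} {N : ℕ} (hg : ∀ i, N ≤ i → g i = 0)
    (h : ∀ i, f i ≤ g i) : psum f ≤ psum g := by
  have hf : ∀ i, N ≤ i → f i = 0 := fun i hi => Nat.le_zero.1 (hg i hi ▸ h i)
  rw [psum_eq_range hf, psum_eq_range hg]
  exact Finset.sum_le_sum fun i _ => h i

lemma wsum_mono {Λ : Type*} {w w1 : Λ → ℕ → ℕ}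
    (hw : IsEigPartitions w) (hw1 : IsEigPartitions w1)
    (h : ∀ l i, w l i ≤ w1 l i) : wsum w ≤ wsum w1 := by
  classical
  have hfin : ((Function.support w) ∪ (Function.support w1)).Finite := hw.2.union hw1.2
  have h1 : wsum w = ∑ l ∈ hfin.toFinset, ∑ᶠ i, w l i := by
    apply finsum_eq_sum_of_support_subset
    intro l hl
    simp only [Function.mem_support] at hl
    simp only [Set.Finite.coe_toFinset, Set.mem_union, Function.mem_support]
    left
    intro hz
    exact hl (by rw [hz]; exact finsum_zero)
  have h2 : wsum w1 = ∑ l ∈ hfin.toFinset, ∑ᶠ i, w1 l i := by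
    apply finsum_eq_sum_of_support_subset
    intro l hl
    simp only [Function.mem_support] at hl
    simp only [Set.Finite.coe_toFinset, Set.mem_union, Function.mem_support]
    right
    intro hz
    exact hl (by rw [hz]; exact finsum_zero)
  rw [h1, h2]
  apply Finset.sum_le_sum
  intro l _
  obtain ⟨N, hN⟩ := (hw1.1 l).2
  exact psum_mono hN (h l)

/-- STATEMENT 10: `H(s)` is a one-row completion of `H_1(s)` with equal ranks
(expressed, per the one-row completion characterization, by
`w_i(λ) ≤ w¹_i(λ) ≤ w_i(λ)+1`, `r_* = r_*¹`, `s_*¹ ∠ s_*`, and the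
rank-equality sum condition).  Then:
(i) `−1 ≤ w_i(λ) − w¹_i(λ) ≤ 0`; (ii) `r_i = r_i¹` for all `i ≥ 0`;
(iii) `1 − ⌊√(|s_*¹|+1)⌋ ≤ s_i − s_i¹ ≤ 1` for all `i ≥ 0`. -/
theorem row_completion_eq_rank_bounds {F : Type*} [Field F] [IsAlgClosed F]
    (w w1 : Option F → ℕ → ℕ) (r r1 s s1 : ℕ → ℕ)
    (hw : IsEigPartitions w) (hw1 : IsEigPartitions w1)
    (hr : IsPartition r) (hr1 : IsPartition r1)
    (hs : IsPartition s) (hs1 : IsPartition s1)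
    (hcomp : ∀ l i, w l i ≤ w1 l i ∧ w1 l i ≤ w l i + 1)
    (hreq : r = r1)
    (hsmaj : CMaj s1 s)
    (hrank : wsum w + psum (ptail r) + psum (ptail s) =
             wsum w1 + psum (ptail r1) + psum (ptail s1)) :
    (∀ l i, -1 ≤ (w l i : ℤ) - (w1 l i : ℤ) ∧ (w l i : ℤ) - (w1 l i : ℤ) ≤ 0) ∧
    (∀ i, r i = r1 i) ∧
    (∀ i, 1 - (Nat.sqrt (psum s1 + 1) : ℤ) ≤ (s i : ℤ) - (s1 i : ℤ) ∧
          (s i : ℤ) - (s1 i : ℤ) ≤ 1) := by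
  obtain ⟨hs_mono, Ns, hsz⟩ := hs
  obtain ⟨hs1_mono, Ns1, hs1z⟩ := hs1
  refine ⟨fun l i => by have := hcomp l i; omega, fun i => by rw [hreq], ?_⟩
  -- setup for part (iii)
  have hT0 : (0 : ℕ) ∈ {j | s1 j < s j} := by
    simp only [Set.mem_setOf_eq, hsmaj.1]; omega
  have hTbdd : BddAbove {j | s1 j < s j} := by
    refine ⟨Ns, fun j hj => ?_⟩
    by_contra hc
    push_neg at hc
    have := hsz j (le_of_lt hc)
    simp only [Set.mem_setOf_eq, this] at hj
    omega
  set g := sSup {j | s1 j < s j} with hgdef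
  have hB : ∀ k ≤ g, s k = s1 k + 1 := hsmaj.2
  have hA : ∀ k, g < k → s k ≤ s1 k := by
    intro k hk
    by_contra hc
    push_neg at hc
    exact absurd (le_csSup hTbdd hc) (not_le.2 hk)
  have hwle : wsum w ≤ wsum w1 := wsum_mono hw hw1 (fun l i => (hcomp l i).1)
  have htail : psum (ptail s1) ≤ psum (ptail s) := by
    rw [hreq] at hrank; omega
  have hsqnn : (0 : ℤ) ≤ (Nat.sqrt (psum s1 + 1) : ℤ) := Int.ofNat_nonneg _
  intro i
  rcases le_or_gt i g with hig | hig
  · have := hB i hig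
    constructor <;> omega
  -- now i > g, in particular i ≥ 1
  set M := Ns + Ns1 + i + g + 1 with hMdef
  have hgM : g < M := by omega
  have hiM : i - 1 < M := by omega
  have e1 : psum (ptail s) = ∑ j ∈ Finset.range M, s (j + 1) :=
    psum_eq_range (fun j hj => hsz (j + 1) (by omega))
  have e2 : psum (ptail s1) = ∑ j ∈ Finset.range M, s1 (j + 1) :=
    psum_eq_range (fun j hj => hs1z (j + 1) (by omega))
  have hsum : (∑ j ∈ Finset.range M, (s1 (j + 1) : ℤ)) ≤
      ∑ j ∈ Finset.range M, (s (j + 1) : ℤ) := by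
    rw [e1, e2] at htail
    exact_mod_cast htail
  set f : ℕ → ℤ := fun j => (s (j + 1) : ℤ) - s1 (j + 1) with hfdef
  have h0 : 0 ≤ ∑ j ∈ Finset.range M, f j := by
    simp only [hfdef, Finset.sum_sub_distrib]
    omega
  have hi'mem : i - 1 ∈ Finset.range M := Finset.mem_range.2 hiM
  have hsplit : ∑ j ∈ Finset.range M, f j =
      f (i - 1) + ∑ j ∈ (Finset.range M).erase (i - 1), f j :=
    (Finset.add_sum_erase _ f hi'mem).symm
  have hbound : ∑ j ∈ (Finset.range M).erase (i - 1), f j ≤ g := by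
    have hb : ∀ j ∈ (Finset.range M).erase (i - 1),
        f j ≤ (if j + 1 ≤ g then (1 : ℤ) else 0) := by
      intro j _
      by_cases hjg : j + 1 ≤ g
      · simp only [hfdef, if_pos hjg, hB (j + 1) hjg]
        push_cast; ring_nf; omega
      · have := hA (j + 1) (by omega)
        simp only [hfdef, if_neg hjg]
        omega
    calc ∑ j ∈ (Finset.range M).erase (i - 1), f j
        ≤ ∑ j ∈ (Finset.range M).erase (i - 1), (if j + 1 ≤ g then (1 : ℤ) else 0) :=
          Finset.sum_le_sum hb
      _ ≤ ∑ j ∈ Finset.range M, (if j + 1 ≤ g then (1 : ℤ) else 0) := by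
          apply Finset.sum_le_sum_of_subset_of_nonneg (Finset.erase_subset _ _)
          intro j _ _
          split <;> norm_num
      _ = g := by
          rw [Finset.sum_ite, Finset.sum_const, Finset.sum_const]
          have hf : (Finset.range M).filter (fun j => j + 1 ≤ g) = Finset.range g := by
            ext j; simp only [Finset.mem_filter, Finset.mem_range]; omega
          rw [hf]
          simp
  have hfi : f (i - 1) = (s i : ℤ) - s1 i := by
    have : i - 1 + 1 = i := by omega
    rw [hfdef]; simp only [this]
  have hdgZ : -(g : ℤ) ≤ (s i : ℤ) - s1 i := by
    rw [hsplit, hfi] at h0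
    omega
  -- psum s1 ≥ (i+1) * s1 i
  have e3 : psum s1 = ∑ j ∈ Finset.range M, s1 j :=
    psum_eq_range (fun j hj => hs1z j (by omega))
  have h4 : ∑ j ∈ Finset.range (i + 1), s1 j ≤ ∑ j ∈ Finset.range M, s1 j :=
    Finset.sum_le_sum_of_subset (Finset.range_subset_range.2 (by omega))
  have h5 : (i + 1) * s1 i ≤ ∑ j ∈ Finset.range (i + 1), s1 j := by
    calc (i + 1) * s1 i = ∑ _j ∈ Finset.range (i + 1), s1 i := by
          rw [Finset.sum_const, Finset.card_range, smul_eq_mul]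
      _ ≤ ∑ j ∈ Finset.range (i + 1), s1 j :=
          Finset.sum_le_sum (fun j hj =>
            hs1_mono j i (by have := Finset.mem_range.1 hj; omega))
  have hpsum : (i + 1) * s1 i ≤ psum s1 := by rw [e3]; omega
  have hd : s i ≤ s1 i := hA i hig
  set d := s1 i - s i with hddef
  have hdg : d ≤ g := by omega
  have hdsi : d ≤ s1 i := by omega
  have hm : d * (d + 2) ≤ s1 i * (i + 1) := Nat.mul_le_mul hdsi (by omega)
  have key : (d + 1) * (d + 1) ≤ psum s1 + 1 := by nlinarith
  have hsqrt : d + 1 ≤ Nat.sqrt (psum s1 + 1) := Nat.le_sqrt.2 key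
  constructor <;> omega
end

section
/- Let H(s) ∈ F[s]^{m×n} be a matrix pencil over an algebraically closed field F with Weyr characteristic (W, r_*, s_*), and for λ ∈ F ∪ {∞} let z_1(λ) = #{i ≥ 1 : w_i(λ) ≥ 1}. Let r_*^1 be a partition. There exist pencils H_1(s) ∈ F[s]^{(m−1)×n} and h(s) ∈ F[s]^{1×n} with H(s) strictly equivalent to stacking h(s) on H_1(s), rank(H_1(s)) = rank(H(s)) − 1, and r_*^1 the column Brunovsky partition of H_1(s), if and only if r_* is conjugate-majorized by r_*^1 and 0 ≤ |r^1| − |r| + 1 ≤ Σ_λ z_1(λ). -/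
/-!
Granting the one-row completion characterisation, the statement is about the eigenvalue data
alone: the rank identity forces `|W| - |W¹| = |r¹| - |r| + 1`, so it suffices to know which
values `|W| - |W¹|` takes over the families `W¹` with `w(λ) - 1 ≤ w¹(λ) ≤ w(λ)`. At each `λ`
at most the `z_1(λ)` nonzero entries of `w(λ)` can lose a box, which bounds the difference by
`Σ_λ z_1(λ)`. Conversely, splitting a target `d ≤ Σ_λ z_1(λ)` as `Σ_λ d_λ` with
`d_λ ≤ z_1(λ)` and removing one box from each of the last `d_λ` nonzero entries of `w(λ)`
keeps every `w(λ)` a partition and realises the difference `d`.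
-/

theorem Function.HasFiniteSupport.of_le {α M : Type*} [AddCommMonoid M] [PartialOrder M]
    [CanonicallyOrderedAdd M] {f g : α → M} (hg : g.HasFiniteSupport) (h : f ≤ g) :
    f.HasFiniteSupport :=
  hg.subset fun a ha h0 => ha (nonpos_iff_eq_zero.1 (h0 ▸ h a))

theorem finsum_indicator_one {α : Type*} (s : Set α) :
    ∑ᶠ i, s.indicator (1 : α → ℕ) i = s.ncard := by
  rw [← finsum_mem_def]
  exact finsum_one

theorem hasFiniteSupport_indicator_one {α : Type*} {s : Set α} (hs : s.Finite) :
    (s.indicator (1 : α → ℕ)).HasFiniteSupport :=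
  hs.subset Set.support_indicator_subset

theorem exists_le_finsum_eq {α : Type*} {f : α → ℕ} (hf : f.HasFiniteSupport) {d : ℕ}
    (hd : d ≤ ∑ᶠ a, f a) : ∃ g ≤ f, ∑ᶠ a, g a = d := by
  induction d with
  | zero => exact ⟨0, fun _ => Nat.zero_le _, by simp⟩
  | succ d ih =>
    obtain ⟨g, hgf, hg⟩ := ih (by omega)
    obtain ⟨a, ha⟩ : ∃ a, g a < f a := by
      by_contra! hfg
      have := finsum_le_finsum' hf (hf.of_le hgf) hfg
      omega
    refine ⟨g + ({a} : Set α).indicator 1, fun b => ?_, ?_⟩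
    · rcases eq_or_ne b a with rfl | hb
      · simpa using ha
      · simpa [hb] using hgf b
    · rw [Pi.add_def, finsum_add_distrib (hf.of_le hgf)
        (hasFiniteSupport_indicator_one (Set.finite_singleton a)), finsum_indicator_one,
        Set.ncard_singleton, hg]

namespace IsPartition

variable {p : ℕ → ℕ}

theorem setOf_one_le_eq_Iio (hp : IsPartition p) : {i | 1 ≤ p i} = Set.Iio (conjPart p 0) := by
  have hex : ∃ N, p N = 0 := let ⟨N, hN⟩ := hp.2; ⟨N, hN N le_rfl⟩
  have hset : {i | 1 ≤ p i} = Set.Iio (Nat.find hex) := by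
    ext i
    simp only [Set.mem_ofPred_eq, Set.mem_Iio, Nat.one_le_iff_ne_zero]
    refine ⟨fun hi => not_le.1 fun hle => hi ?_, fun hi => Nat.find_min hex hi⟩
    exact Nat.eq_zero_of_le_zero (Nat.find_spec hex ▸ hp.1 _ _ hle)
  rw [conjPart, zero_add, hset, Nat.card_coe_set_eq, Set.ncard_Iio_nat]

theorem one_le_iff_lt_conjPart_zero (hp : IsPartition p) {i : ℕ} : 1 ≤ p i ↔ i < conjPart p 0 :=
  Set.ext_iff.1 hp.setOf_one_le_eq_Iio i

theorem hasFiniteSupport (hp : IsPartition p) : p.HasFiniteSupport := by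
  obtain ⟨N, hN⟩ := hp.2
  exact (Set.finite_Iio N).subset fun i hi => not_le.1 fun hle => hi (hN i hle)

theorem finsum_le_finsum_add_conjPart {q : ℕ → ℕ} (hp : IsPartition p) (hq : q.HasFiniteSupport)
    (hpq : ∀ i, p i ≤ q i + 1) : ∑ᶠ i, p i ≤ ∑ᶠ i, q i + conjPart p 0 := by
  have hind := hasFiniteSupport_indicator_one (Set.finite_Iio (conjPart p 0))
  calc ∑ᶠ i, p i ≤ ∑ᶠ i, (q i + (Set.Iio (conjPart p 0)).indicator 1 i) := by
        refine finsum_le_finsum' hp.hasFiniteSupport (hq.add hind) fun i => ?_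
        have := hpq i
        have := hp.one_le_iff_lt_conjPart_zero (i := i)
        simp only [Set.indicator_apply, Set.mem_Iio, Pi.one_apply]
        split_ifs <;> omega
    _ = ∑ᶠ i, q i + conjPart p 0 := by
        rw [finsum_add_distrib hq hind, finsum_indicator_one, Set.ncard_Iio_nat]

theorem exists_sandwich_finsum_eq_add (hp : IsPartition p) {k : ℕ} (hk : k ≤ conjPart p 0) :
    ∃ q, IsPartition q ∧ (∀ i, q i ≤ p i ∧ p i ≤ q i + 1) ∧ ∑ᶠ i, p i = ∑ᶠ i, q i + k := by
  set z := conjPart p 0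
  -- one box is removed from each of the last `k` nonzero entries, which keeps `q` decreasing
  set q : ℕ → ℕ := fun i => p i - (Set.Ici (z - k)).indicator 1 i with hq
  have hqp : ∀ i, q i ≤ p i ∧ p i ≤ q i + 1 := fun i => by
    simp only [hq, Set.indicator_apply, Pi.one_apply]
    split_ifs <;> omega
  have hq_supp : q.HasFiniteSupport := hp.hasFiniteSupport.of_le fun i => (hqp i).1
  refine ⟨q, ⟨fun i j hij => ?_, ?_⟩, hqp, ?_⟩
  · have := hp.1 i j hij
    simp only [hq, Set.indicator_apply, Set.mem_Ici, Pi.one_apply]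
    split_ifs <;> omega
  · obtain ⟨N, hN⟩ := hp.2
    exact ⟨N, fun i hi => Nat.eq_zero_of_le_zero (hN i hi ▸ (hqp i).1)⟩
  · have hsplit : ∀ i, p i = q i + (Set.Ico (z - k) z).indicator 1 i := fun i => by
      have := hp.one_le_iff_lt_conjPart_zero (i := i)
      simp only [hq, Set.indicator_apply, Set.mem_Ici, Set.mem_Ico, Pi.one_apply]
      split_ifs <;> omega
    rw [finsum_congr hsplit, finsum_add_distrib hq_supp
      (hasFiniteSupport_indicator_one (Set.finite_Ico _ _)), finsum_indicator_one,
      Set.ncard_Ico_nat]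
    omega

end IsPartition

section EigPartitions

variable {Λ : Type*} {w w1 : Λ → ℕ → ℕ}

theorem IsEigPartitions.hasFiniteSupport (hw : IsEigPartitions w) : w.HasFiniteSupport :=
  hw.2

theorem hasFiniteSupport_finsum_apply (hw : w.HasFiniteSupport) :
    (fun l => ∑ᶠ i, w l i).HasFiniteSupport :=
  hw.fun_comp (g := fun p => ∑ᶠ i, p i) finsum_zero

theorem hasFiniteSupport_conjPart_zero (hw : w.HasFiniteSupport) :
    (fun l => conjPart (w l) 0).HasFiniteSupport :=
  hw.fun_comp (g := fun p => conjPart p 0) (by simp [conjPart])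

theorem wsum_le_wsum (hw : ∀ l, (w l).HasFiniteSupport) (hw' : w.HasFiniteSupport)
    (h : w1 ≤ w) : wsum w1 ≤ wsum w :=
  finsum_le_finsum' (hasFiniteSupport_finsum_apply (hw'.of_le h))
    (hasFiniteSupport_finsum_apply hw') fun l =>
      finsum_le_finsum' ((hw l).of_le (h l)) (hw l) (h l)

theorem IsEigPartitions.wsum_le_wsum_add_finsum_conjPart (hw : IsEigPartitions w)
    (hw1 : ∀ l, (w1 l).HasFiniteSupport) (hw1' : w1.HasFiniteSupport)
    (h : ∀ l i, w l i ≤ w1 l i + 1) : wsum w ≤ wsum w1 + ∑ᶠ l, conjPart (w l) 0 :=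
  have hconj := hasFiniteSupport_conjPart_zero hw.hasFiniteSupport
  calc wsum w ≤ ∑ᶠ l, (∑ᶠ i, w1 l i + conjPart (w l) 0) :=
        finsum_le_finsum' (hasFiniteSupport_finsum_apply hw.hasFiniteSupport)
          ((hasFiniteSupport_finsum_apply hw1').add hconj)
          fun l => (hw.1 l).finsum_le_finsum_add_conjPart (hw1 l) (h l)
    _ = wsum w1 + ∑ᶠ l, conjPart (w l) 0 :=
        finsum_add_distrib (hasFiniteSupport_finsum_apply hw1') hconj

theorem IsEigPartitions.exists_sandwich_wsum_eq_add (hw : IsEigPartitions w) {d : ℕ}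
    (hd : d ≤ ∑ᶠ l, conjPart (w l) 0) :
    ∃ w1, IsEigPartitions w1 ∧ (∀ l i, w1 l i ≤ w l i ∧ w l i ≤ w1 l i + 1) ∧
      wsum w = wsum w1 + d := by
  have hconj := hasFiniteSupport_conjPart_zero hw.hasFiniteSupport
  obtain ⟨k, hk, rfl⟩ := exists_le_finsum_eq hconj hd
  choose w1 hw1 hsand hsum using fun l => (hw.1 l).exists_sandwich_finsum_eq_add (hk l)
  have hw1_supp : w1.HasFiniteSupport := hw.hasFiniteSupport.of_le fun l i => (hsand l i).1
  refine ⟨w1, ⟨hw1, hw1_supp⟩, hsand, ?_⟩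
  rw [wsum, finsum_congr hsum,
    finsum_add_distrib (hasFiniteSupport_finsum_apply hw1_supp) (hconj.of_le hk), wsum]

end EigPartitions

theorem prescribed_col_brunovsky_subpencil_rank_drop_iff_general
    {F : Type*}
    (w : Option F → ℕ → ℕ) (r r1 s : ℕ → ℕ)
    (hw : IsEigPartitions w) (hs : IsPartition s) :
    (∃ w1 : Option F → ℕ → ℕ, ∃ s1 : ℕ → ℕ,
        IsEigPartitions w1 ∧ IsPartition s1 ∧
        (∀ l i, w1 l i ≤ w l i ∧ w l i ≤ w1 l i + 1) ∧
        CMaj r r1 ∧ s1 = s ∧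
        wsum w + psum (ptail r) + psum (ptail s) =
          wsum w1 + psum (ptail r1) + psum (ptail s1) + 1) ↔
    (CMaj r r1 ∧
     psum (ptail r) ≤ psum (ptail r1) + 1 ∧
     psum (ptail r1) + 1 ≤ psum (ptail r) + ∑ᶠ l, conjPart (w l) 0) := by
  constructor
  · rintro ⟨w1, s1, hw1, -, hsand, hcm, rfl, hsum⟩
    have hle := wsum_le_wsum (fun l => (hw.1 l).hasFiniteSupport) hw.hasFiniteSupport
      fun l i => (hsand l i).1
    have hle_add := hw.wsum_le_wsum_add_finsum_conjPart (fun l => (hw1.1 l).hasFiniteSupport)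
      hw1.hasFiniteSupport fun l i => (hsand l i).2
    exact ⟨hcm, by omega, by omega⟩
  · rintro ⟨hcm, hlow, hup⟩
    obtain ⟨w1, hw1, hsand, hsum⟩ :=
      hw.exists_sandwich_wsum_eq_add (d := psum (ptail r1) + 1 - psum (ptail r)) (by omega)
    exact ⟨w1, s, hw1, hs, hsand, hcm, rfl, by omega⟩

/-- STATEMENT 16: `H(s)` has Weyr characteristic `(W, r_*, s_*)`, with
`z_1(λ) = #{i ≥ 1 : w_i(λ) ≥ 1}`, and `r_*¹` is a partition.  The existence of
pencils `H_1(s)`, `h(s)` with `H(s)` strictly equivalent to stacking `h(s)` on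
`H_1(s)`, `rank H_1 = rank H − 1`, and `r_*¹` the column Brunovsky partition of
`H_1(s)` — equivalently (by the rank-drop one-row completion characterization
and the existence of pencils with prescribed Weyr characteristic) the existence
of Weyr data `W¹, s_*¹` completing `r_*¹` — holds iff `r_* ∠ r_*¹` and
`0 ≤ |r¹| − |r| + 1 ≤ Σ_λ z_1(λ)`. -/
theorem prescribed_col_brunovsky_subpencil_rank_drop_iff
    {F : Type*} [Field F] [IsAlgClosed F]
    (w : Option F → ℕ → ℕ) (r r1 s : ℕ → ℕ)
    (hw : IsEigPartitions w) (hr : IsPartition r) (hr1 : IsPartition r1)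
    (hs : IsPartition s) :
    (∃ w1 : Option F → ℕ → ℕ, ∃ s1 : ℕ → ℕ,
        IsEigPartitions w1 ∧ IsPartition s1 ∧
        (∀ l i, w1 l i ≤ w l i ∧ w l i ≤ w1 l i + 1) ∧
        CMaj r r1 ∧ s1 = s ∧
        wsum w + psum (ptail r) + psum (ptail s) =
          wsum w1 + psum (ptail r1) + psum (ptail s1) + 1) ↔
    (CMaj r r1 ∧
     psum (ptail r) ≤ psum (ptail r1) + 1 ∧
     psum (ptail r1) + 1 ≤ psum (ptail r) + ∑ᶠ l, conjPart (w l) 0) :=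
  prescribed_col_brunovsky_subpencil_rank_drop_iff_general w r r1 s hw hs
end
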